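/- arXiv:1405.3416 — 7 statements merged into one kernel-verified Lean document; each statement's English description precedes it below -/
import Mathlib

section
/- If P is a p-group with normal subgroups A and B such that P = AB, then the Frattini subgroup satisfies Φ(P) = Φ(A)Φ(B)[A,B]. -/
open Subgroup
open scoped commutatorElement

section Aux

variable {G : Type*} [Group G]

lemma mem_frattini_of_forall {x : G} (h : ∀ M : Subgroup G, IsCoatom M → x ∈ M) :
    x ∈ frattini G := by
  show x ∈ ⨅ a ∈ {H : Subgroup G | IsCoatom H}, a
  simp only [Subgroup.mem_iInf]
  exact h

lemma isCoatom_ker_aux {p : ℕ} [Fact p.Prime] (φ : G →* Multiplicative (ZMod p)) {x : G}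
    (hx : φ x ≠ 1) : IsCoatom φ.ker := by
  constructor
  · intro h
    exact hx (MonoidHom.mem_ker.mp (h ▸ Subgroup.mem_top x))
  · intro K hK
    obtain ⟨k, hkK, hk⟩ := SetLike.exists_of_lt hK
    have hφk : φ k ≠ 1 := by simpa [MonoidHom.mem_ker] using hk
    have hcard : Nat.card (Multiplicative (ZMod p)) = p := by
      simp [Nat.card_eq_fintype_card, ZMod.card]
    have horder : orderOf (φ k) = p := by
      have hdvd : orderOf (φ k) ∣ p := by
        simpa [hcard] using orderOf_dvd_natCard (φ k)
      rcases (Fact.out : p.Prime).eq_one_or_self_of_dvd _ hdvd with h | h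
      · exact absurd (orderOf_eq_one_iff.mp h) hφk
      · exact h
    have hzp : Subgroup.zpowers (φ k) = ⊤ := by
      apply Subgroup.eq_top_of_card_eq
      rw [Nat.card_zpowers, horder, hcard]
    have hmap : Subgroup.map φ K = ⊤ := by
      rw [eq_top_iff, ← hzp]
      exact (Subgroup.zpowers_le).mpr ⟨k, hkK, rfl⟩
    have h2 := Subgroup.comap_map_eq φ K
    rw [hmap, Subgroup.comap_top, sup_of_le_left hK.le] at h2
    exact h2.symm

lemma exists_addHom_ne_zero {p : ℕ} [Fact p.Prime] (V : Type*) [AddCommGroup V]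
    [Module (ZMod p) V] {x : V} (hx : x ≠ 0) : ∃ f : V →+ ZMod p, f x ≠ 0 := by
  obtain ⟨f, hf⟩ : ∃ f : V →ₗ[ZMod p] ZMod p, f x ≠ 0 := by
    by_contra h
    push_neg at h
    exact hx ((Module.forall_dual_apply_eq_zero_iff (ZMod p) x).mp h)
  exact ⟨f.toAddMonoidHom, hf⟩

lemma frattini_eq_bot_of_elementary [Finite G] {p : ℕ} [Fact p.Prime]
    (hcomm : ∀ x y : G, x * y = y * x) (hpow : ∀ x : G, x ^ p = 1) :
    frattini G = ⊥ := by
  rw [eq_bot_iff]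
  intro x hx
  rw [Subgroup.mem_bot]
  by_contra hx1
  letI : CommGroup G := { ‹Group G› with mul_comm := hcomm }
  letI m : Module (ZMod p) (Additive G) := AddCommGroup.zmodModule (by
    intro a
    rcases Additive.ofMul.surjective a with ⟨g, rfl⟩
    rw [← ofMul_pow, hpow, ofMul_one])
  have hx0 : Additive.ofMul x ≠ 0 := by
    simpa using hx1
  obtain ⟨f, hf⟩ := @exists_addHom_ne_zero p _ (Additive G) _ m _ hx0
  set φ : G →* Multiplicative (ZMod p) := AddMonoidHom.toMultiplicativeRight f
  have hφx : φ x ≠ 1 := by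
    simpa [φ, AddMonoidHom.coe_toMultiplicativeRight] using hf
  have hco := isCoatom_ker_aux φ hφx
  exact hφx (MonoidHom.mem_ker.mp (frattini_le_coatom hco hx))

lemma exists_pow_prime_aux {Q : Type*} [Group Q] {p : ℕ} :
    ∀ (k : ℕ) (x : Q), x ≠ 1 → x ^ p ^ k = 1 → ∃ y : Q, y ≠ 1 ∧ y ^ p = 1 := by
  intro k
  induction k with
  | zero => intro x hx h; simp only [pow_zero, pow_one] at h; exact absurd h hx
  | succ n ih =>
    intro x hx h
    by_cases h' : x ^ p ^ n = 1
    · exact ih x hx h'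
    · exact ⟨x ^ p ^ n, h', by rw [← pow_mul, ← pow_succ]; exact h⟩

lemma pgroup_coatom_props [Finite G] {p : ℕ} [Fact p.Prime] (hG : IsPGroup p G)
    {M : Subgroup G} (hM : IsCoatom M) :
    (∀ g : G, g ^ p ∈ M) ∧ ∀ a b : G, ⁅a, b⁆ ∈ M := by
  haveI : Group.IsNilpotent G := hG.isNilpotent
  have hnc := normalizerCondition_of_isNilpotent (G := G)
  haveI hMn : M.Normal := by
    rw [← Subgroup.normalizer_eq_top_iff]
    rcases eq_or_lt_of_le (Subgroup.le_normalizer (H := M)) with h | h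
    · exact absurd h (ne_of_lt (hnc M (lt_top_iff_ne_top.mpr hM.1)))
    · exact hM.2 _ h
  -- subgroups of the quotient are ⊥ or ⊤
  have hsub : ∀ H : Subgroup (G ⧸ M), H = ⊥ ∨ H = ⊤ := by
    intro H
    have hker : M ≤ H.comap (QuotientGroup.mk' M) := by
      intro m hm
      rw [Subgroup.mem_comap]
      rw [QuotientGroup.mk'_apply, (QuotientGroup.eq_one_iff m).mpr hm]
      exact H.one_mem
    have hHmap : H = Subgroup.map (QuotientGroup.mk' M) (H.comap (QuotientGroup.mk' M)) :=
      (Subgroup.map_comap_eq_self_of_surjective (QuotientGroup.mk'_surjective M) H).symm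
    rcases eq_or_lt_of_le hker with h | h
    · left
      rw [hHmap, ← h, Subgroup.map_eq_bot_iff, QuotientGroup.ker_mk']
    · right
      rw [hHmap, hM.2 _ h, Subgroup.map_top_of_surjective _ (QuotientGroup.mk'_surjective M)]
  -- the quotient is nontrivial
  obtain ⟨g0, -, hg0⟩ := SetLike.exists_of_lt (lt_top_iff_ne_top.mpr hM.1)
  have hg0' : (g0 : G ⧸ M) ≠ 1 := by
    rw [Ne, QuotientGroup.eq_one_iff]; exact hg0
  obtain ⟨k, hk⟩ := (hG.to_quotient M) (g0 : G ⧸ M)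
  obtain ⟨y, hy1, hyp⟩ := exists_pow_prime_aux k _ hg0' hk
  have hzy : Subgroup.zpowers y = ⊤ := by
    rcases hsub (Subgroup.zpowers y) with h | h
    · exact absurd (Subgroup.zpowers_eq_bot.mp h) hy1
    · exact h
  have hmem : ∀ q : G ⧸ M, ∃ n : ℤ, y ^ n = q := by
    intro q
    have : q ∈ Subgroup.zpowers y := hzy ▸ Subgroup.mem_top q
    exact Subgroup.mem_zpowers_iff.mp this
  constructor
  · intro g
    rw [← QuotientGroup.eq_one_iff]
    obtain ⟨n, hn⟩ := hmem (g : G ⧸ M)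
    have : ((g ^ p : G) : G ⧸ M) = ((g : G ⧸ M)) ^ p := by
      simp
    rw [this, ← hn]
    have h3 : (y ^ n) ^ p = (y ^ p) ^ n := by
      rw [← zpow_natCast (y ^ n) p, ← zpow_mul, mul_comm, zpow_mul, zpow_natCast]
    rw [h3, hyp, one_zpow]
  · intro a b
    rw [← QuotientGroup.eq_one_iff]
    have : ((⁅a, b⁆ : G) : G ⧸ M) = ⁅(QuotientGroup.mk' M) a, (QuotientGroup.mk' M) b⁆ :=
      map_commutatorElement (QuotientGroup.mk' M) a b
    rw [this, commutatorElement_eq_one_iff_commute]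
    obtain ⟨m, hm⟩ := hmem ((QuotientGroup.mk' M) a)
    obtain ⟨n, hn⟩ := hmem ((QuotientGroup.mk' M) b)
    rw [← hm, ← hn]
    exact (Commute.refl y).zpow_zpow m n

lemma frattini_le_of_quot [Finite G] (p : ℕ) [Fact p.Prime]
    (N : Subgroup G) [N.Normal]
    (h1 : ∀ a b : G, ⁅a, b⁆ ∈ N) (h2 : ∀ g : G, g ^ p ∈ N) :
    frattini G ≤ N := by
  have hle := frattini_le_comap_frattini_of_surjective (QuotientGroup.mk'_surjective N)
  have hQ : frattini (G ⧸ N) = ⊥ := by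
    apply frattini_eq_bot_of_elementary (p := p)
    · intro x y
      induction x using QuotientGroup.induction_on with | H a =>
      induction y using QuotientGroup.induction_on with | H b =>
      have hc : Commute ((QuotientGroup.mk' N) a) ((QuotientGroup.mk' N) b) := by
        rw [← commutatorElement_eq_one_iff_commute, ← map_commutatorElement]
        rw [QuotientGroup.mk'_apply, QuotientGroup.eq_one_iff]
        exact h1 a b
      exact hc.eq
    · intro x
      induction x using QuotientGroup.induction_on with | H a =>
      have : ((a : G ⧸ N)) ^ p = ((a ^ p : G) : G ⧸ N) := by simp
      rw [this, QuotientGroup.eq_one_iff]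
      exact h2 a
  rw [hQ] at hle
  have : ((⊥ : Subgroup (G ⧸ N)).comap (QuotientGroup.mk' N)) = N := by
    rw [MonoidHom.comap_bot, QuotientGroup.ker_mk']
  rwa [this] at hle

end Aux

/-- If `P` is a finite `p`-group with normal subgroups `A` and `B` such that `P = AB`,
then `Φ(P) = Φ(A) Φ(B) [A,B]`. -/
theorem frattini_of_product_of_normals (p : ℕ) [Fact p.Prime]
    (P : Type*) [Group P] [Finite P] (hP : IsPGroup p P)
    (A B : Subgroup P) [A.Normal] [B.Normal] (hAB : A ⊔ B = ⊤) :
    frattini P =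
      (frattini A).map A.subtype ⊔ (frattini B).map B.subtype ⊔ ⁅A, B⁆ := by
  haveI : ((frattini A).map A.subtype).Normal := ConjAct.normal_of_characteristic_of_normal
  haveI : ((frattini B).map B.subtype).Normal := ConjAct.normal_of_characteristic_of_normal
  set N := (frattini A).map A.subtype ⊔ (frattini B).map B.subtype ⊔ ⁅A, B⁆ with hNdef
  haveI : N.Normal := by
    rw [hNdef]
    infer_instance
  have hA : IsPGroup p A := hP.to_subgroup A
  have hB : IsPGroup p B := hP.to_subgroup B
  have hfp_pow : ∀ g : P, g ^ p ∈ frattini P := fun g =>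
    mem_frattini_of_forall fun M hM => (pgroup_coatom_props hP hM).1 g
  have hfp_comm : ∀ a b : P, ⁅a, b⁆ ∈ frattini P := fun a b =>
    mem_frattini_of_forall fun M hM => (pgroup_coatom_props hP hM).2 a b
  have hdecomp : ∀ g : P, ∃ a ∈ A, ∃ b ∈ B, g = a * b := by
    intro g
    have hg : g ∈ ((A ⊔ B : Subgroup P) : Set P) := by
      rw [hAB]; trivial
    rw [Subgroup.mul_normal A B] at hg
    obtain ⟨a, ha, b, hb, hab⟩ := hg
    exact ⟨a, ha, b, hb, hab.symm⟩
  -- pieces of N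
  have hfa : (frattini A).map A.subtype ≤ N := le_sup_of_le_left le_sup_left
  have hfb : (frattini B).map B.subtype ≤ N := le_sup_of_le_left le_sup_right
  have hab_le : ⁅A, B⁆ ≤ N := le_sup_right
  have hcommN : ∀ a ∈ A, ∀ b ∈ B, ⁅a, b⁆ ∈ N := fun a ha b hb =>
    hab_le (Subgroup.commutator_mem_commutator ha hb)
  have hAA : ∀ a a' : A, ⁅(a : P), (a' : P)⁆ ∈ N := by
    intro a a'
    have h1 : ⁅a, a'⁆ ∈ frattini A :=
      mem_frattini_of_forall fun M hM => (pgroup_coatom_props hA hM).2 a a'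
    exact hfa ⟨⁅a, a'⁆, h1, map_commutatorElement A.subtype a a'⟩
  have hBB : ∀ b b' : B, ⁅(b : P), (b' : P)⁆ ∈ N := by
    intro b b'
    have h1 : ⁅b, b'⁆ ∈ frattini B :=
      mem_frattini_of_forall fun M hM => (pgroup_coatom_props hB hM).2 b b'
    exact hfb ⟨⁅b, b'⁆, h1, map_commutatorElement B.subtype b b'⟩
  have hApow : ∀ a : A, ((a : P)) ^ p ∈ N := by
    intro a
    have h1 : a ^ p ∈ frattini A :=
      mem_frattini_of_forall fun M hM => (pgroup_coatom_props hA hM).1 a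
    exact hfa ⟨a ^ p, h1, by simp⟩
  have hBpow : ∀ b : B, ((b : P)) ^ p ∈ N := by
    intro b
    have h1 : b ^ p ∈ frattini B :=
      mem_frattini_of_forall fun M hM => (pgroup_coatom_props hB hM).1 b
    exact hfb ⟨b ^ p, h1, by simp⟩
  -- translate membership in N into commutation in the quotient
  set φ := QuotientGroup.mk' N with hφ
  have hCommute : ∀ u v : P, ⁅u, v⁆ ∈ N → Commute (φ u) (φ v) := by
    intro u v huv
    rw [← commutatorElement_eq_one_iff_commute, ← map_commutatorElement]
    rw [hφ, QuotientGroup.mk'_apply, QuotientGroup.eq_one_iff]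
    exact huv
  apply le_antisymm
  · -- frattini P ≤ N
    apply frattini_le_of_quot p
    · -- commutators
      intro x y
      obtain ⟨a1, ha1, b1, hb1, hx⟩ := hdecomp x
      obtain ⟨a2, ha2, b2, hb2, hy⟩ := hdecomp y
      have c11 : Commute (φ a1) (φ a2) := hCommute _ _ (hAA ⟨a1, ha1⟩ ⟨a2, ha2⟩)
      have c12 : Commute (φ a1) (φ b2) := hCommute _ _ (hcommN a1 ha1 b2 hb2)
      have c21 : Commute (φ b1) (φ a2) := (hCommute _ _ (hcommN a2 ha2 b1 hb1)).symm
      have c22 : Commute (φ b1) (φ b2) := hCommute _ _ (hBB ⟨b1, hb1⟩ ⟨b2, hb2⟩)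
      have hc : Commute (φ x) (φ y) := by
        rw [hx, hy, map_mul, map_mul]
        exact (c11.mul_right c12).mul_left (c21.mul_right c22)
      rw [← QuotientGroup.eq_one_iff (⁅x, y⁆ : P)]
      have : ((⁅x, y⁆ : P) : P ⧸ N) = ⁅φ x, φ y⁆ := map_commutatorElement φ x y
      rw [this, commutatorElement_eq_one_iff_commute]
      exact hc
    · -- p-th powers
      intro g
      obtain ⟨a, ha, b, hb, hg⟩ := hdecomp g
      have cab : Commute (φ a) (φ b) := hCommute _ _ (hcommN a ha b hb)
      have hpa : (φ a) ^ p = 1 := by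
        rw [← map_pow, hφ, QuotientGroup.mk'_apply, QuotientGroup.eq_one_iff]
        exact hApow ⟨a, ha⟩
      have hpb : (φ b) ^ p = 1 := by
        rw [← map_pow, hφ, QuotientGroup.mk'_apply, QuotientGroup.eq_one_iff]
        exact hBpow ⟨b, hb⟩
      rw [← QuotientGroup.eq_one_iff (g ^ p)]
      have : ((g ^ p : P) : P ⧸ N) = (φ g) ^ p := by
        rw [hφ, QuotientGroup.mk'_apply]; simp
      rw [this, hg, map_mul, cab.mul_pow, hpa, hpb, one_mul]
  · -- N ≤ frattini P
    apply sup_le (sup_le ?_ ?_) ?_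
    · rw [Subgroup.map_le_iff_le_comap]
      apply frattini_le_of_quot p
      · intro a b
        rw [Subgroup.mem_comap, map_commutatorElement]
        exact hfp_comm _ _
      · intro a
        rw [Subgroup.mem_comap, map_pow]
        exact hfp_pow _
    · rw [Subgroup.map_le_iff_le_comap]
      apply frattini_le_of_quot p
      · intro a b
        rw [Subgroup.mem_comap, map_commutatorElement]
        exact hfp_comm _ _
      · intro a
        rw [Subgroup.mem_comap, map_pow]
        exact hfp_pow _
    · rw [Subgroup.commutator_le]
      intro g1 _ g2 _
      exact hfp_comm g1 g2
end

section
/- Define W = V × V* as a set, where V = GF(2)³ and V* its dual, with addition (v,α)+(w,β) = (v+w+ε(α,β), α+β), where ε(α,β) = 0 if α = β or one of α,β is 0, and otherwise ε(α,β) is the unique nonzero vector of ker α ∩ ker β. Then W is an elementary abelian 2-group. -/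
namespace WEA

abbrev V := Fin 3 → ZMod 2
abbrev Vd := Module.Dual (ZMod 2) V

def cross (a b : V) : V :=
  ![a 1 * b 2 + a 2 * b 1, a 0 * b 2 + a 2 * b 0, a 0 * b 1 + a 1 * b 0]

def E (a b : V) : V := if a = b ∨ a = 0 ∨ b = 0 then 0 else cross a b

def c (α : Vd) : V := fun i => α (Pi.single i 1)

lemma apply_eq (α : Vd) (v : V) :
    α v = v 0 * c α 0 + v 1 * c α 1 + v 2 * c α 2 := by
  have h : v = v 0 • (Pi.single 0 1 : V) + v 1 • (Pi.single 1 1 : V) + v 2 • (Pi.single 2 1 : V) := by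
    funext i; fin_cases i <;> simp [Pi.single_apply]
  rw [h]
  simp [c, map_add, map_smul, smul_eq_mul]

lemma c_zero : c (0 : Vd) = 0 := by funext i; simp [c]

lemma c_add (α β : Vd) : c (α + β) = c α + c β := by funext i; simp [c]

lemma c_inj {α β : Vd} (h : c α = c β) : α = β := by
  apply LinearMap.ext; intro v
  rw [apply_eq, apply_eq, h]

lemma cross_ne : ∀ a b : V, a ≠ b → a ≠ 0 → b ≠ 0 → cross a b ≠ 0 := by decide

lemma ortho : ∀ a b : V,
    (cross a b) 0 * a 0 + (cross a b) 1 * a 1 + (cross a b) 2 * a 2 = 0 ∧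
    (cross a b) 0 * b 0 + (cross a b) 1 * b 1 + (cross a b) 2 * b 2 = 0 := by decide

lemma Esymm : ∀ a b : V, E a b = E b a := by decide

lemma Ecocycle : ∀ a b d : V, E a b + E (a + b) d = E b d + E a (b + d) := by decide



lemma Emain (ε : Vd → Vd → V)
    (hdiag : ∀ α, ε α α = 0)
    (hzero : ∀ α, ε 0 α = 0 ∧ ε α 0 = 0)
    (huniq : ∀ α β, α ≠ β → α ≠ 0 → β ≠ 0 →
      ∀ v, v ≠ 0 → α v = 0 → β v = 0 → v = ε α β) :
    ∀ α β, ε α β = E (c α) (c β) := by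
  intro α β
  by_cases hab : α = β
  · subst hab; rw [hdiag, E, if_pos (Or.inl rfl)]
  by_cases ha : α = 0
  · subst ha; rw [(hzero β).1, E, if_pos (Or.inr (Or.inl c_zero))]
  by_cases hb : β = 0
  · subst hb; rw [(hzero α).2, E, if_pos (Or.inr (Or.inr c_zero))]
  · have hca : c α ≠ 0 := fun h => ha (c_inj (h.trans c_zero.symm))
    have hcb : c β ≠ 0 := fun h => hb (c_inj (h.trans c_zero.symm))
    have hcab : c α ≠ c β := fun h => hab (c_inj h)
    rw [E, if_neg (by tauto)]
    refine (huniq α β hab ha hb _ (cross_ne _ _ hcab hca hcb) ?_ ?_).symm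
    · rw [apply_eq]; exact (ortho (c α) (c β)).1
    · rw [apply_eq]; exact (ortho (c α) (c β)).2

end WEA

/-- Let `V = GF(2)³` and `V*` its dual, and let `ε : V* × V* → V` be given by
`ε(α,β) = 0` if `α = β` or one of `α`, `β` is zero, and otherwise `ε(α,β)` is the unique
nonzero vector of `ker α ∩ ker β`.  Then `W = V × V*` with the addition
`(v,α) + (w,β) = (v + w + ε(α,β), α + β)` is an elementary abelian 2-group. -/
theorem W_elementary_abelian
    (ε : Module.Dual (ZMod 2) (Fin 3 → ZMod 2) → Module.Dual (ZMod 2) (Fin 3 → ZMod 2) →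
      (Fin 3 → ZMod 2))
    (hdiag : ∀ α, ε α α = 0)
    (hzero : ∀ α, ε 0 α = 0 ∧ ε α 0 = 0)
    (hmem : ∀ α β, α ≠ β → α ≠ 0 → β ≠ 0 → ε α β ≠ 0 ∧ α (ε α β) = 0 ∧ β (ε α β) = 0)
    (huniq : ∀ α β, α ≠ β → α ≠ 0 → β ≠ 0 →
      ∀ v, v ≠ 0 → α v = 0 → β v = 0 → v = ε α β)
    (add : ((Fin 3 → ZMod 2) × Module.Dual (ZMod 2) (Fin 3 → ZMod 2)) →
      ((Fin 3 → ZMod 2) × Module.Dual (ZMod 2) (Fin 3 → ZMod 2)) →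
      ((Fin 3 → ZMod 2) × Module.Dual (ZMod 2) (Fin 3 → ZMod 2)))
    (hadd : ∀ x y, add x y = (x.1 + y.1 + ε x.2 y.2, x.2 + y.2)) :
    (∀ x y, add x y = add y x) ∧
    (∀ x y z, add (add x y) z = add x (add y z)) ∧
    (∀ x, add x 0 = x) ∧
    (∀ x, add x x = 0) := by
  have hE := WEA.Emain ε hdiag hzero huniq
  refine ⟨?_, ?_, ?_, ?_⟩
  · intro x y
    rw [hadd, hadd, hE, hE, WEA.Esymm]
    exact Prod.ext (by push_cast; ring) (by simp [add_comm])
  · intro x y z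
    rw [hadd, hadd, hadd, hadd]
    simp only [hE, WEA.c_add]
    have h := WEA.Ecocycle (WEA.c x.2) (WEA.c y.2) (WEA.c z.2)
    exact Prod.ext (by dsimp only; linear_combination h) (by simp [add_assoc])
  · intro x
    rw [hadd]
    exact Prod.ext (by simp [Prod.snd_zero, (hzero x.2).2]) (by simp)
  · intro x
    rw [hadd, hdiag]
    refine Prod.ext (by simp; abel_nf; simp [CharTwo.two_eq_zero]) ?_
    · dsimp only
      ext v
      simp [CharTwo.add_self_eq_zero]
end

section
/- With W as above, the map q : W → GF(2) defined by q(v,α) = 0 if α = 0 or (α ≠ 0 and v ∉ ker α), and q(v,α) = 1 if α ≠ 0 and v ∈ ker α, is a quadratic form on W invariant under the induced diagonal action of GL(3,2). -/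
/-- The natural 3-dimensional representation of `GL(3,2)` on `V = GF(2)³`. -/
def natRep : Representation (ZMod 2) (GL (Fin 3) (ZMod 2)) (Fin 3 → ZMod 2) :=
  ((Matrix.toLinAlgEquiv' :
      Matrix (Fin 3) (Fin 3) (ZMod 2) ≃ₐ[ZMod 2]
        Module.End (ZMod 2) (Fin 3 → ZMod 2)).toAlgHom.toMonoidHom).comp
    (Units.coeHom (Matrix (Fin 3) (Fin 3) (ZMod 2)))

open scoped Classical in
/-- The quadratic form `q` on `W = V × V*`: `q(v,α) = 1` iff `α ≠ 0` and `v ∈ ker α`. -/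
noncomputable def qW (x : (Fin 3 → ZMod 2) × Module.Dual (ZMod 2) (Fin 3 → ZMod 2)) :
    ZMod 2 :=
  if x.2 ≠ 0 ∧ x.2 x.1 = 0 then 1 else 0

/-! ### Auxiliary coordinate world -/

def dotv (a v : Fin 3 → ZMod 2) : ZMod 2 := a 0 * v 0 + a 1 * v 1 + a 2 * v 2

def qc (a v : Fin 3 → ZMod 2) : ZMod 2 := if a ≠ 0 ∧ dotv a v = 0 then 1 else 0

def fz (a : Fin 3 → ZMod 2) : ZMod 2 := if a ≠ 0 then 1 else 0

def chiZ (a c : Fin 3 → ZMod 2) : ZMod 2 := fz a + fz c + fz (a + c)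

def vecsZ : List (Fin 3 → ZMod 2) :=
  [![0,0,1], ![0,1,0], ![0,1,1], ![1,0,0], ![1,0,1], ![1,1,0], ![1,1,1]]

def epsc (a c : Fin 3 → ZMod 2) : Fin 3 → ZMod 2 :=
  if a ≠ c ∧ a ≠ 0 ∧ c ≠ 0 then
    (vecsZ.find? (fun e => decide (dotv a e = 0 ∧ dotv c e = 0))).getD 0
  else 0

def toD (a : Fin 3 → ZMod 2) : Module.Dual (ZMod 2) (Fin 3 → ZMod 2) where
  toFun v := dotv a v
  map_add' v w := by simp only [dotv, Pi.add_apply]; ring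
  map_smul' r v := by simp only [dotv, Pi.smul_apply, smul_eq_mul, RingHom.id_apply]; ring

lemma toD_apply (a v : Fin 3 → ZMod 2) : toD a v = dotv a v := rfl

lemma dotv_single (a : Fin 3 → ZMod 2) (i : Fin 3) (x : ZMod 2) :
    dotv a (Pi.single i x) = a i * x := by
  fin_cases i <;> simp [dotv, Pi.single_apply]

lemma toD_add (a c : Fin 3 → ZMod 2) : toD a + toD c = toD (a + c) := by
  refine LinearMap.ext fun v => ?_
  simp only [LinearMap.add_apply, toD_apply, dotv, Pi.add_apply]
  ring

lemma toD_zero : toD 0 = 0 := by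
  refine LinearMap.ext fun v => ?_
  simp [toD_apply, dotv]

lemma toD_injective : Function.Injective toD := by
  intro a c h
  funext i
  have := congrArg (fun f : Module.Dual (ZMod 2) (Fin 3 → ZMod 2) => f (Pi.single i 1)) h
  simpa [toD_apply, dotv_single] using this

lemma toD_eq_zero_iff (a : Fin 3 → ZMod 2) : toD a = 0 ↔ a = 0 := by
  constructor
  · intro h; exact toD_injective (by rw [h, toD_zero])
  · rintro rfl; exact toD_zero

lemma toD_surj (α : Module.Dual (ZMod 2) (Fin 3 → ZMod 2)) : ∃ a, toD a = α := by
  refine ⟨![α (Pi.single (0 : Fin 3) (1 : ZMod 2)), α (Pi.single (1 : Fin 3) (1 : ZMod 2)), α (Pi.single (2 : Fin 3) (1 : ZMod 2))], ?_⟩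
  refine LinearMap.pi_ext fun i x => ?_
  rw [toD_apply, dotv_single]
  have hx : Pi.single i x = x • (Pi.single i 1 : Fin 3 → ZMod 2) := by
    funext j
    by_cases h : j = i <;> simp [Pi.single_apply, h]
  rw [hx, map_smul, smul_eq_mul]
  fin_cases i <;> simp <;> ring

lemma qW_toD (a v : Fin 3 → ZMod 2) : qW (v, toD a) = qc a v := by
  unfold qW qc
  exact if_congr (and_congr_left' (not_congr (toD_eq_zero_iff a))) rfl rfl

/-! ### Decidable facts -/

lemma epsc_ne : ∀ a c : Fin 3 → ZMod 2, a ≠ c → a ≠ 0 → c ≠ 0 → epsc a c ≠ 0 := by decide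

lemma epsc_d1 : ∀ a c : Fin 3 → ZMod 2, dotv a (epsc a c) = 0 := by decide

lemma epsc_d2 : ∀ a c : Fin 3 → ZMod 2, dotv c (epsc a c) = 0 := by decide

lemma epsc_sum : ∀ a c : Fin 3 → ZMod 2, dotv (a + c) (epsc a c) = 0 := by decide

lemma qc_strip : ∀ a u e : Fin 3 → ZMod 2, dotv a e = 0 → qc a (u + e) = qc a u := by decide

lemma dotv_addl : ∀ a a' w : Fin 3 → ZMod 2, dotv (a + a') w = dotv a w + dotv a' w := by
  intro a a' w; simp only [dotv, Pi.add_apply]; ring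

lemma dotv_addr : ∀ a v v' : Fin 3 → ZMod 2, dotv a (v + v') = dotv a v + dotv a v' := by
  intro a v v'; simp only [dotv, Pi.add_apply]; ring

lemma chi_comm : ∀ a c : Fin 3 → ZMod 2, chiZ a c = chiZ c a := by decide

set_option maxHeartbeats 4000000 in
lemma lemB : ∀ a c v w : Fin 3 → ZMod 2,
    qc (a + c) (v + w) + qc a v + qc c w = dotv a w + dotv c v + chiZ a c := by decide

set_option maxHeartbeats 1000000 in
lemma lemD : ∀ a a' c : Fin 3 → ZMod 2,
    dotv c (epsc a a') + (chiZ (a + a') c + chiZ a c + chiZ a' c) = 0 := by decide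

lemma solver : ∀ A1 A2 C0 C1 Ce X Y Z : ZMod 2, Ce + (X + Y + Z) = 0 →
    A1 + A2 + (C0 + C1 + Ce) + X = A1 + C0 + Y + (A2 + C1 + Z) := by decide

/-- With `W = V × V*` carrying the twisted addition
`(v,α) + (w,β) = (v + w + ε(α,β), α + β)`, the map `q` is a `GL(3,2)`-invariant quadratic
form on `W`: it is invariant under the diagonal action `g • (v,α) = (gv, (g*)⁻¹α)` of
`GL(3,2)`, and its polarisation `b(x,y) = q(x+y) + q(x) + q(y)` is (symmetric and) bilinear. -/
theorem qW_invariant_quadratic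
    (ε : Module.Dual (ZMod 2) (Fin 3 → ZMod 2) → Module.Dual (ZMod 2) (Fin 3 → ZMod 2) →
      (Fin 3 → ZMod 2))
    (hdiag : ∀ α, ε α α = 0)
    (hzero : ∀ α, ε 0 α = 0 ∧ ε α 0 = 0)
    (hmem : ∀ α β, α ≠ β → α ≠ 0 → β ≠ 0 → ε α β ≠ 0 ∧ α (ε α β) = 0 ∧ β (ε α β) = 0)
    (huniq : ∀ α β, α ≠ β → α ≠ 0 → β ≠ 0 →
      ∀ v, v ≠ 0 → α v = 0 → β v = 0 → v = ε α β)
    (add : ((Fin 3 → ZMod 2) × Module.Dual (ZMod 2) (Fin 3 → ZMod 2)) →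
      ((Fin 3 → ZMod 2) × Module.Dual (ZMod 2) (Fin 3 → ZMod 2)) →
      ((Fin 3 → ZMod 2) × Module.Dual (ZMod 2) (Fin 3 → ZMod 2)))
    (hadd : ∀ x y, add x y = (x.1 + y.1 + ε x.2 y.2, x.2 + y.2))
    (b : ((Fin 3 → ZMod 2) × Module.Dual (ZMod 2) (Fin 3 → ZMod 2)) →
      ((Fin 3 → ZMod 2) × Module.Dual (ZMod 2) (Fin 3 → ZMod 2)) → ZMod 2)
    (hb : ∀ x y, b x y = qW (add x y) + qW x + qW y) :
    (∀ (g : GL (Fin 3) (ZMod 2)) (x : (Fin 3 → ZMod 2) ×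
        Module.Dual (ZMod 2) (Fin 3 → ZMod 2)),
      qW (natRep g x.1, natRep.dual g x.2) = qW x) ∧
    (∀ x y, b x y = b y x) ∧
    (∀ x x' y, b (add x x') y = b x y + b x' y) := by
  -- `ε` agrees with the concrete `epsc` in coordinates
  have hE : ∀ a c : Fin 3 → ZMod 2, ε (toD a) (toD c) = epsc a c := by
    intro a c
    by_cases hac : a = c
    · subst hac
      have h0 : epsc a a = 0 := by simp [epsc]
      rw [hdiag, h0]
    by_cases ha : a = 0
    · subst ha
      have h0 : epsc 0 c = 0 := by simp [epsc]
      rw [toD_zero, (hzero (toD c)).1, h0]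
    by_cases hc : c = 0
    · subst hc
      have h0 : epsc a 0 = 0 := by simp [epsc]
      rw [toD_zero, (hzero (toD a)).2, h0]
    · have hne : toD a ≠ toD c := fun h => hac (toD_injective h)
      have hna : toD a ≠ 0 := fun h => ha ((toD_eq_zero_iff a).mp h)
      have hnc : toD c ≠ 0 := fun h => hc ((toD_eq_zero_iff c).mp h)
      exact (huniq (toD a) (toD c) hne hna hnc (epsc a c) (epsc_ne a c hac ha hc)
        (by rw [toD_apply]; exact epsc_d1 a c)
        (by rw [toD_apply]; exact epsc_d2 a c)).symm
  -- closed form for `b` in coordinates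
  have bval : ∀ (v w a c : Fin 3 → ZMod 2),
      b (v, toD a) (w, toD c) = dotv a w + dotv c v + chiZ a c := by
    intro v w a c
    rw [hb, hadd]
    dsimp only
    rw [hE, toD_add, qW_toD, qW_toD, qW_toD, qc_strip _ _ _ (epsc_sum a c)]
    exact lemB a c v w
  refine ⟨?_, ?_, ?_⟩
  · -- invariance
    intro g x
    have hinv : ∀ v, natRep g⁻¹ (natRep g v) = v := by
      intro v
      have h1 : natRep g⁻¹ * natRep g = 1 := by rw [← map_mul, inv_mul_cancel, map_one]
      calc natRep g⁻¹ (natRep g v) = (natRep g⁻¹ * natRep g) v := rfl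
        _ = v := by rw [h1]; rfl
    have hdual : (natRep.dual g x.2) (natRep g x.1) = x.2 x.1 := by
      simp only [Representation.dual_apply, Module.Dual.transpose_apply, LinearMap.comp_apply]
      rw [hinv]
    have hz : natRep.dual g x.2 = 0 ↔ x.2 = 0 := by
      constructor
      · intro h
        refine LinearMap.ext fun v => ?_
        have := congrArg (fun f : Module.Dual (ZMod 2) (Fin 3 → ZMod 2) =>
          f (natRep g v)) h
        simpa [Representation.dual_apply, Module.Dual.transpose_apply, hinv v] using this
      · intro h; simp [h]
    simp only [qW, hdual, ne_eq, hz]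
  · -- symmetry
    rintro ⟨v, α⟩ ⟨w, β⟩
    obtain ⟨a, rfl⟩ := toD_surj α
    obtain ⟨c, rfl⟩ := toD_surj β
    rw [bval, bval, chi_comm]
    ring
  · -- bilinearity
    rintro ⟨v, α⟩ ⟨v', α'⟩ ⟨w, β⟩
    obtain ⟨a, rfl⟩ := toD_surj α
    obtain ⟨a', rfl⟩ := toD_surj α'
    obtain ⟨c, rfl⟩ := toD_surj β
    have h1 : add (v, toD a) (v', toD a') = (v + v' + epsc a a', toD (a + a')) := by
      rw [hadd]
      dsimp only
      rw [hE, toD_add]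
    rw [h1, bval, bval, bval, dotv_addl, dotv_addr, dotv_addr]
    exact solver _ _ _ _ _ _ _ _ (lemD a a' c)
end

section
/- Let G be a group with a normal 2-subgroup Q such that C_G(Q) = Z(Q) = ⟨z⟩ has order 2, and suppose α is an automorphism of G centralizing Q. Then α² = 1, and the fixed-point subgroup C_G(α) has index at most 2 in G and contains Q. -/
/-- Let `G` be a finite group with a normal 2-subgroup `Q` such that
`C_G(Q) = Z(Q) = ⟨z⟩` has order 2, and let `α` be an automorphism of `G` centralising `Q`.
Then `α² = 1` and the fixed-point subgroup of `α` contains `Q` and has index at most 2. -/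
theorem automorphism_centralizing_selfcentralizing_2group
    (G : Type*) [Group G] [Finite G]
    (Q : Subgroup G) [Q.Normal] (hQ2 : IsPGroup 2 Q)
    (z : G) (hz : orderOf z = 2) (hzQ : Subgroup.zpowers z ≤ Q)
    (hcent : Subgroup.centralizer (Q : Set G) = Subgroup.zpowers z)
    (α : G ≃* G) (hα : ∀ q ∈ Q, α q = q) :
    (∀ g : G, α (α g) = g) ∧
    Q ≤ MonoidHom.eqLocus α.toMonoidHom (MonoidHom.id G) ∧
    (MonoidHom.eqLocus α.toMonoidHom (MonoidHom.id G)).index ≤ 2 := by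
  have hz2 : z * z = 1 := by
    have h := pow_orderOf_eq_one z
    rw [hz, pow_two] at h; exact h
  have hzne : z ≠ 1 := by
    intro h; rw [h, orderOf_one] at hz; omega
  -- elements of zpowers z are 1 or z
  have memz : ∀ w ∈ Subgroup.zpowers z, w = 1 ∨ w = z := by
    rintro w ⟨k, rfl⟩
    have hz2' : z ^ (2:ℤ) = 1 := by
      rw [show (2:ℤ) = ((2:ℕ):ℤ) by norm_num, zpow_natCast, pow_two]; exact hz2
    rcases Int.even_or_odd k with ⟨m, rfl⟩ | ⟨m, rfl⟩
    · left
      show z ^ (m + m) = 1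
      rw [show m + m = 2 * m by ring, zpow_mul, hz2', one_zpow]
    · right
      show z ^ (2 * m + 1) = z
      rw [zpow_add, zpow_mul, hz2', one_zpow, one_mul, zpow_one]
  -- key : g⁻¹ * α g centralizes Q
  have key : ∀ g : G, g⁻¹ * α g ∈ Subgroup.zpowers z := by
    intro g
    rw [← hcent, Subgroup.mem_centralizer_iff]
    intro q hq
    have hconj : g * q * g⁻¹ ∈ Q := Subgroup.Normal.conj_mem ‹Q.Normal› q hq g
    have h1 : α (g * q * g⁻¹) = g * q * g⁻¹ := hα _ hconj
    have h2 : α g * q * (α g)⁻¹ = g * q * g⁻¹ := by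
      rw [← h1]; simp [map_mul, hα q hq]
    have h3 : α g * q = g * q * g⁻¹ * α g := by
      rw [← h2]; group
    calc q * (g⁻¹ * α g) = g⁻¹ * (g * q * g⁻¹ * α g) := by group
      _ = g⁻¹ * (α g * q) := by rw [← h3]
      _ = (g⁻¹ * α g) * q := by group
  -- z is central
  have hzcent : ∀ g : G, g * z = z * g := by
    intro g
    have hmem : g * z * g⁻¹ ∈ Subgroup.zpowers z := by
      rw [← hcent, Subgroup.mem_centralizer_iff]
      intro q hq
      have hq' : g⁻¹ * q * g ∈ Q := by
        have := Subgroup.Normal.conj_mem ‹Q.Normal› q hq g⁻¹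
        simpa using this
      have hzc : (g⁻¹ * q * g) * z = z * (g⁻¹ * q * g) := by
        have hzmem : z ∈ Subgroup.centralizer (Q : Set G) := by
          rw [hcent]; exact Subgroup.mem_zpowers z
        exact Subgroup.mem_centralizer_iff.mp hzmem _ hq'
      calc q * (g * z * g⁻¹) = g * ((g⁻¹ * q * g) * z) * g⁻¹ := by group
        _ = g * (z * (g⁻¹ * q * g)) * g⁻¹ := by rw [hzc]
        _ = (g * z * g⁻¹) * q := by group
    rcases memz _ hmem with h | h
    · exfalso
      apply hzne
      have : g * z = g := by
        have := congrArg (· * g) h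
        simpa [mul_assoc] using this
      exact mul_left_cancel (this.trans (mul_one g).symm)
    · have := congrArg (· * g) h
      simpa [mul_assoc] using this
  have hww : ∀ w ∈ Subgroup.zpowers z, w * w = 1 := by
    intro w hw
    rcases memz w hw with h | h <;> rw [h] <;> simp [hz2]
  -- the map φ g = g⁻¹ * α g is a hom
  have hφmul : ∀ a b : G, (a*b)⁻¹ * α (a*b) = (a⁻¹ * α a) * (b⁻¹ * α b) := by
    intro a b
    have hc : ∀ x : G, (a⁻¹ * α a) * x = x * (a⁻¹ * α a) := by
      intro x
      rcases memz _ (key a) with h | h <;> rw [h]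
      · simp
      · exact (hzcent x).symm
    calc (a*b)⁻¹ * α (a*b) = b⁻¹ * ((a⁻¹ * α a) * α b) := by
          rw [map_mul]; group
      _ = b⁻¹ * (α b * (a⁻¹ * α a)) := by rw [hc]
      _ = (a⁻¹ * α a) * (b⁻¹ * α b) := by rw [hc]; group
  set φ : G →* G := MonoidHom.mk' (fun g => g⁻¹ * α g) hφmul with hφ
  have hrange : φ.range ≤ Subgroup.zpowers z := by
    rintro _ ⟨g, rfl⟩; exact key g
  have hsq : ∀ g : G, α (α g) = g := by
    intro g
    have hg : α g = g * (g⁻¹ * α g) := by group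
    have hmemQ : g⁻¹ * α g ∈ Q := hzQ (key g)
    calc α (α g) = α (g * (g⁻¹ * α g)) := by rw [← hg]
      _ = α g * (g⁻¹ * α g) := by rw [map_mul, hα _ hmemQ]
      _ = g * ((g⁻¹ * α g) * (g⁻¹ * α g)) := by group
      _ = g := by rw [hww _ (key g)]; simp
  refine ⟨hsq, ?_, ?_⟩
  · intro q hq
    exact hα q hq
  · have hker : MonoidHom.eqLocus α.toMonoidHom (MonoidHom.id G) = φ.ker := by
      ext g
      rw [MonoidHom.mem_ker]
      constructor
      · intro h
        have h' : α g = g := h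
        show g⁻¹ * α g = 1
        rw [h']; simp
      · intro h
        have h1 : g⁻¹ * α g = 1 := h
        have h2 : α g = g := by
          have := congrArg (g * ·) h1
          simpa [mul_assoc] using this
        exact h2
    rw [hker, Subgroup.index_ker]
    have h1 : Nat.card φ.range ≤ Nat.card (Subgroup.zpowers z) :=
      Subgroup.card_le_of_le hrange
    have h2 : Nat.card (Subgroup.zpowers z) = 2 := by
      rw [Nat.card_zpowers, hz]
    calc Nat.card φ.range ≤ Nat.card (Subgroup.zpowers z) := h1
      _ = 2 := h2
end

section
/- If Δ is a tree in which every vertex has valency 3 or 7 and adjacent vertices have different valencies, then the distance-two graph of Δ restricted to the valency-7 vertices is connected of valency 14, and every edge of this graph lies in a unique triangle. -/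
open SimpleGraph
section Aux
variable {V : Type*} {Δ : SimpleGraph V}

private lemma aux_unique_mid (hac : Δ.IsAcyclic) {a b m m' : V}
    (h1 : Δ.Adj a m) (h2 : Δ.Adj m b) (h1' : Δ.Adj a m') (h2' : Δ.Adj m' b)
    (hab : a ≠ b) : m = m' := by
  have hp : (Walk.cons h1 (Walk.cons h2 Walk.nil)).IsPath := by
    simp [Walk.isPath_def, h1.ne, h2.ne, hab]
  have hp' : (Walk.cons h1' (Walk.cons h2' Walk.nil)).IsPath := by
    simp [Walk.isPath_def, h1'.ne, h2'.ne, hab]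
  have heq := isAcyclic_iff_path_unique.mp hac ⟨_, hp⟩ ⟨_, hp'⟩
  have hs := congrArg (fun p : Δ.Path a b => p.1.support) heq
  simpa using hs

private lemma aux_dist_two (hconn : Δ.Connected) {a m c : V} (h1 : Δ.Adj a m)
    (h2 : Δ.Adj m c) (hac : a ≠ c) (hnadj : ¬ Δ.Adj a c) : Δ.dist a c = 2 := by
  have hle : Δ.dist a c ≤ 2 := by
    simpa using Δ.dist_le (Walk.cons h1 (Walk.cons h2 Walk.nil))
  have h0 : Δ.dist a c ≠ 0 := fun h => hac (hconn.dist_eq_zero_iff.mp h)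
  have h1' : Δ.dist a c ≠ 1 := fun h => hnadj (dist_eq_one_iff_adj.mp h)
  omega

private lemma aux_mid {a c : V} (h : Δ.dist a c = 2) :
    ∃ m, Δ.Adj a m ∧ Δ.Adj m c := by
  have hr : Δ.Reachable a c := by
    by_contra hn
    rw [dist_eq_zero_of_not_reachable hn] at h
    omega
  obtain ⟨p, hp, hl⟩ := hr.exists_path_of_dist
  rw [h] at hl
  cases p with
  | nil => simp at hl
  | cons h1 q =>
    cases q with
    | nil => simp at hl
    | cons h2 q' =>
      cases q' with
      | nil => exact ⟨_, h1, h2⟩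
      | cons h3 q'' => simp [Walk.length_cons] at hl

private lemma aux_third {s : Set V} (hs : s.ncard = 3) {a b : V} (ha : a ∈ s)
    (hb : b ∈ s) (hab : a ≠ b) : ∃ c ∈ s, c ≠ a ∧ c ≠ b := by
  by_contra hn
  push_neg at hn
  have hsub : s ⊆ {a, b} := by
    intro x hx
    rcases eq_or_ne x a with rfl | hxa
    · exact Set.mem_insert _ _
    · exact Set.mem_insert_iff.mpr (Or.inr (hn x hx hxa))
  have := Set.ncard_le_ncard hsub ((Set.finite_singleton _).insert _)
  rw [hs, Set.ncard_pair hab] at this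
  omega

private lemma aux_three {s : Set V} (hfin : s.Finite) (hs : s.ncard = 3) {a b c d : V}
    (ha : a ∈ s) (hb : b ∈ s) (hc : c ∈ s) (hd : d ∈ s)
    (hab : a ≠ b) (hac : a ≠ c) (had : a ≠ d) (hbc : b ≠ c) (hbd : b ≠ d) : c = d := by
  by_contra hcd
  have hsub : ({a, b, c, d} : Set V) ⊆ s := by
    intro x hx
    rcases hx with rfl | rfl | rfl | rfl
    · exact ha
    · exact hb
    · exact hc
    · exact hd
  have h4 : ({a, b, c, d} : Set V).ncard = 4 := by
    rw [Set.ncard_insert_of_notMem (by simp [hab, hac, had])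
        ((Set.finite_singleton _).insert _ |>.insert _),
      Set.ncard_insert_of_notMem (by simp [hbc, hbd]) ((Set.finite_singleton _).insert _),
      Set.ncard_pair hcd]
  have := Set.ncard_le_ncard hsub hfin
  rw [hs, h4] at this
  omega

private lemma aux_first_step {a b : V} (p : Δ.Walk a b) (hp : p.IsPath)
    (h0 : p.length ≠ 0) (h1 : p.length ≠ 1) :
    ∃ (m x : V) (q : Δ.Walk x b), Δ.Adj a m ∧ Δ.Adj m x ∧ a ≠ x ∧
      q.length + 2 = p.length := by
  cases p with
  | nil => simp at h0
  | cons h1' q =>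
    cases q with
    | nil => simp at h1
    | cons h2' q' =>
      rename_i m x
      refine ⟨m, x, q', h1', h2', ?_, by simp [Walk.length_cons]⟩
      intro heq
      have hnd := hp.2
      rw [Walk.support_cons] at hnd
      have := (List.nodup_cons.mp hnd).1
      rw [Walk.support_cons] at this
      exact this (List.mem_cons_of_mem _ (heq ▸ q'.start_mem_support))

end Aux

/-- Let `Δ` be a tree in which every vertex has valency 3 or 7 and adjacent vertices have
different valencies.  Then the distance-two graph `Γ` of `Δ` on the valency-7 vertices is
connected of valency 14, and every edge of `Γ` lies in a unique triangle. -/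
theorem distance_two_graph_of_tree
    (V : Type*) (Δ : SimpleGraph V) (htree : Δ.IsTree)
    (hval : ∀ v : V, Nat.card (Δ.neighborSet v) = 3 ∨ Nat.card (Δ.neighborSet v) = 7)
    (hbip : ∀ u v : V, Δ.Adj u v →
      Nat.card (Δ.neighborSet u) ≠ Nat.card (Δ.neighborSet v))
    (Γ : SimpleGraph {v : V // Nat.card (Δ.neighborSet v) = 7})
    (hΓ : Γ = SimpleGraph.fromRel (fun a b => Δ.dist a.1 b.1 = 2)) :
    Γ.Connected ∧
    (∀ a, Nat.card (Γ.neighborSet a) = 14) ∧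
    (∀ a b, Γ.Adj a b → ∃! c, Γ.Adj a c ∧ Γ.Adj b c) := by
  classical
  obtain ⟨hconn, hacyc⟩ := htree
  -- valency facts
  have hsmall : ∀ {u v : V}, Δ.Adj u v → Nat.card (Δ.neighborSet u) = 7 →
      Nat.card (Δ.neighborSet v) = 3 := by
    intro u v h h7
    rcases hval v with h3 | h7'
    · exact h3
    · exact absurd (h7.trans h7'.symm) (hbip u v h)
  have hbig : ∀ {u v : V}, Δ.Adj u v → Nat.card (Δ.neighborSet u) = 3 →
      Nat.card (Δ.neighborSet v) = 7 := by
    intro u v h h3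
    rcases hval v with h3' | h7
    · exact absurd (h3.trans h3'.symm) (hbip u v h)
    · exact h7
  have hnadj77 : ∀ {u v : V}, Nat.card (Δ.neighborSet u) = 7 →
      Nat.card (Δ.neighborSet v) = 7 → ¬ Δ.Adj u v := by
    intro u v hu hv h
    exact hbip u v h (hu.trans hv.symm)
  have hAdjΓ : ∀ a b : {v : V // Nat.card (Δ.neighborSet v) = 7},
      Γ.Adj a b ↔ a.1 ≠ b.1 ∧ Δ.dist a.1 b.1 = 2 := by
    subst hΓ
    intro a b
    rw [fromRel_adj]
    constructor
    · rintro ⟨hne, h | h⟩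
      · exact ⟨fun h' => hne (Subtype.ext h'), h⟩
      · exact ⟨fun h' => hne (Subtype.ext h'), (Δ.dist_comm ▸ h : _)⟩
    · rintro ⟨hne, h⟩
      exact ⟨fun h' => hne (congrArg Subtype.val h'), Or.inl h⟩
  -- distance-2 from a big vertex lands at a big vertex
  have hmk2 : ∀ {u m c : V}, Nat.card (Δ.neighborSet u) = 7 → Δ.Adj u m → Δ.Adj m c →
      u ≠ c → Δ.dist u c = 2 := by
    intro u m c h7 h1 h2 hne
    exact aux_dist_two hconn h1 h2 hne (hnadj77 h7 (hbig h2 (hsmall h1 h7)))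
  have hdist2big : ∀ {u c : V}, Nat.card (Δ.neighborSet u) = 7 → Δ.dist u c = 2 →
      Nat.card (Δ.neighborSet c) = 7 := by
    intro u c h7 hd
    obtain ⟨m, h1, h2⟩ := aux_mid hd
    exact hbig h2 (hsmall h1 h7)
  -- connectivity
  have hNE : Nonempty {v : V // Nat.card (Δ.neighborSet v) = 7} := by
    obtain ⟨v⟩ := hconn.nonempty
    rcases hval v with h3 | h7
    · have hfin : Finite (Δ.neighborSet v) := Nat.finite_of_card_ne_zero (by rw [h3]; omega)
      have hne : (Δ.neighborSet v).Nonempty := by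
        rw [← Set.nonempty_coe_sort]
        rcases isEmpty_or_nonempty (Δ.neighborSet v) with he | hne
        · rw [Nat.card_of_isEmpty] at h3; omega
        · exact hne
      obtain ⟨m, hm⟩ := hne
      exact ⟨⟨m, hbig hm h3⟩⟩
    · exact ⟨⟨v, h7⟩⟩
  have hreach : ∀ n (a b : {v : V // Nat.card (Δ.neighborSet v) = 7}),
      Δ.dist a.1 b.1 ≤ n → Γ.Reachable a b := by
    intro n
    induction n using Nat.strong_induction_on with
    | _ n ih =>
      intro a b hd
      rcases eq_or_ne a b with rfl | hab
      · exact Reachable.refl a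
      have hab' : a.1 ≠ b.1 := fun h => hab (Subtype.ext h)
      have h0 : Δ.dist a.1 b.1 ≠ 0 := fun h => hab' (hconn.dist_eq_zero_iff.mp h)
      have h1 : Δ.dist a.1 b.1 ≠ 1 := fun h =>
        hnadj77 a.2 b.2 (dist_eq_one_iff_adj.mp h)
      obtain ⟨p, hp, hl⟩ := (hconn a.1 b.1).exists_path_of_dist
      obtain ⟨m, x, q', h1', h2', hax, hlen⟩ :=
        aux_first_step p hp (by omega) (by omega)
      have hsm : Nat.card (Δ.neighborSet m) = 3 := hsmall h1' a.2
      have hxbig : Nat.card (Δ.neighborSet x) = 7 := hbig h2' hsm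
      have hd2 : Δ.dist a.1 x = 2 := hmk2 a.2 h1' h2' hax
      have hadjac : Γ.Adj a ⟨x, hxbig⟩ := (hAdjΓ a ⟨x, hxbig⟩).mpr ⟨hax, hd2⟩
      rw [hl] at hlen
      have hdcb : Δ.dist x b.1 ≤ n - 2 := le_trans (Δ.dist_le q') (by omega)
      exact hadjac.reachable.trans (ih (n - 2) (by omega) ⟨x, hxbig⟩ b hdcb)
  refine ⟨?_, ?_, ?_⟩
  · rw [connected_iff]
    exact ⟨fun a b => hreach _ a b le_rfl, hNE⟩
  · -- valency 14
    intro a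
    have hAfin : (Δ.neighborSet a.1).Finite :=
      Set.finite_coe_iff.mp (Nat.finite_of_card_ne_zero (by rw [a.2]; omega))
    have hsmall' : ∀ m : V, Δ.Adj a.1 m → Nat.card (Δ.neighborSet m) = 3 :=
      fun m hm => hsmall hm a.2
    have hNmFin : ∀ m : V, Δ.Adj a.1 m → (Δ.neighborSet m).Finite := fun m hm =>
      Set.finite_coe_iff.mp (Nat.finite_of_card_ne_zero (by rw [hsmall' m hm]; omega))
    have hBfin : ∀ m : V, Δ.Adj a.1 m → (Δ.neighborSet m \ {a.1}).Finite :=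
      fun m hm => (hNmFin m hm).diff
    have hcard1 : Nat.card (Γ.neighborSet a) =
        Nat.card {c : V | Δ.dist a.1 c = 2} := by
      apply Nat.card_eq_of_bijective
        (fun b => (⟨b.1.1, ((hAdjΓ a b.1).mp b.2).2⟩ : {c : V | Δ.dist a.1 c = 2}))
      constructor
      · intro x y h
        simp only [Subtype.mk.injEq] at h
        exact Subtype.ext (Subtype.ext h)
      · rintro ⟨c, hc⟩
        simp only [Set.mem_setOf_eq] at hc
        have hc7 : Nat.card (Δ.neighborSet c) = 7 := hdist2big a.2 hc
        have hnec : a.1 ≠ c := by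
          intro h
          rw [← h, SimpleGraph.dist_self] at hc
          omega
        exact ⟨⟨⟨c, hc7⟩, (hAdjΓ a ⟨c, hc7⟩).mpr ⟨hnec, hc⟩⟩, rfl⟩
    classical
    let g : V → Finset V := fun m =>
      if h : (Δ.neighborSet m \ {a.1}).Finite then h.toFinset else ∅
    have hgmem : ∀ m : V, Δ.Adj a.1 m → ∀ c : V,
        (c ∈ g m ↔ Δ.Adj m c ∧ c ≠ a.1) := by
      intro m hm c
      simp only [g, dif_pos (hBfin m hm), Set.Finite.mem_toFinset, Set.mem_diff,
        mem_neighborSet, Set.mem_singleton_iff]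
    let s : Finset V := hAfin.toFinset
    have hsmem : ∀ m : V, m ∈ s ↔ Δ.Adj a.1 m := fun m => by
      simp only [s, Set.Finite.mem_toFinset, mem_neighborSet]
    have hTeq : {c : V | Δ.dist a.1 c = 2} = ↑(s.biUnion g) := by
      ext c
      simp only [Set.mem_setOf_eq, Finset.coe_biUnion, Set.mem_iUnion, Finset.mem_coe,
        Set.mem_setOf_eq]
      constructor
      · intro hc
        obtain ⟨m, h1, h2⟩ := aux_mid hc
        have hnec : a.1 ≠ c := by
          intro h
          rw [← h, SimpleGraph.dist_self] at hc
          omega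
        exact ⟨m, (hsmem m).mpr h1, (hgmem m h1 c).mpr ⟨h2, hnec.symm⟩⟩
      · rintro ⟨m, hm, hc⟩
        have h1 : Δ.Adj a.1 m := (hsmem m).mp hm
        obtain ⟨h2, hnec⟩ := (hgmem m h1 c).mp hc
        exact hmk2 a.2 h1 h2 (fun h => hnec h.symm)
    have hdisj : ∀ m₁ ∈ s, ∀ m₂ ∈ s, m₁ ≠ m₂ → Disjoint (g m₁) (g m₂) := by
      intro m1 hm1 m2 hm2 hne12
      rw [Finset.disjoint_left]
      intro c hc1 hc2
      have h1 : Δ.Adj a.1 m1 := (hsmem m1).mp hm1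
      have h2 : Δ.Adj a.1 m2 := (hsmem m2).mp hm2
      obtain ⟨e1, hca⟩ := (hgmem m1 h1 c).mp hc1
      obtain ⟨e2, _⟩ := (hgmem m2 h2 c).mp hc2
      exact hne12 (aux_unique_mid hacyc h1 e1 h2 e2 (fun h => hca h.symm))
    have hgcard : ∀ m ∈ s, (g m).card = 2 := by
      intro m hm
      have h1 : Δ.Adj a.1 m := (hsmem m).mp hm
      have hfin := hBfin m h1
      have hnc : (Δ.neighborSet m \ {a.1}).ncard = 2 := by
        rw [Set.ncard_diff_singleton_of_mem ((Δ.mem_neighborSet m a.1).mpr h1.symm),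
          ← Nat.card_coe_set_eq, hsmall' m h1]
      rw [← hnc, Set.ncard_eq_toFinset_card _ hfin]
      simp only [g, dif_pos hfin]
    have hscard : s.card = 7 := by
      rw [show s = hAfin.toFinset from rfl, ← Set.ncard_eq_toFinset_card _ hAfin,
        ← Nat.card_coe_set_eq, a.2]
    rw [hcard1, Nat.card_coe_set_eq, hTeq, Set.ncard_coe_finset,
      Finset.card_biUnion hdisj, Finset.sum_congr rfl hgcard, Finset.sum_const,
      hscard]
    simp
  · -- unique triangle
    intro a b hab
    rw [hAdjΓ] at hab
    obtain ⟨hne, hd⟩ := hab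
    obtain ⟨m, h1, h2⟩ := aux_mid hd
    have hm3 : Nat.card (Δ.neighborSet m) = 3 := hsmall h1 a.2
    have hNm : (Δ.neighborSet m).ncard = 3 := by
      rw [← Nat.card_coe_set_eq]; exact hm3
    have hNmfin : (Δ.neighborSet m).Finite :=
      Set.finite_coe_iff.mp (Nat.finite_of_card_ne_zero (by rw [hm3]; omega))
    have haM : a.1 ∈ Δ.neighborSet m := h1.symm
    have hbM : b.1 ∈ Δ.neighborSet m := h2
    obtain ⟨c, hcM, hca, hcb⟩ := aux_third hNm haM hbM hne
    have hc7 : Nat.card (Δ.neighborSet c) = 7 := hbig hcM hm3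
    have hadj_ac : Γ.Adj a ⟨c, hc7⟩ :=
      (hAdjΓ a ⟨c, hc7⟩).mpr ⟨fun h => hca h.symm, hmk2 a.2 h1 hcM (fun h => hca h.symm)⟩
    have hadj_bc : Γ.Adj b ⟨c, hc7⟩ :=
      (hAdjΓ b ⟨c, hc7⟩).mpr ⟨fun h => hcb h.symm, hmk2 b.2 h2.symm hcM (fun h => hcb h.symm)⟩
    refine ⟨⟨c, hc7⟩, ⟨hadj_ac, hadj_bc⟩, ?_⟩
    rintro y ⟨hay, hby⟩
    rw [hAdjΓ] at hay hby
    obtain ⟨hne1, hd1⟩ := hay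
    obtain ⟨hne2, hd2⟩ := hby
    apply Subtype.ext
    obtain ⟨m1, g1, g2⟩ := aux_mid hd1
    obtain ⟨m2, k1, k2⟩ := aux_mid hd2
    have hnadj_ab : ¬ Δ.Adj a.1 b.1 := hnadj77 a.2 b.2
    by_cases hm1 : m1 = m
    · subst hm1
      exact (aux_three hNmfin hNm haM hbM hcM g2 hne hca.symm hne1 hcb.symm hne2).symm
    · by_cases hm2 : m2 = m
      · subst hm2
        exact (aux_three hNmfin hNm haM hbM hcM k2 hne hca.symm
          (fun h => hne1 h) hcb.symm hne2).symm
      · exfalso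
        have hm12 : m1 ≠ m2 := fun h =>
          hm1 (aux_unique_mid hacyc g1 (by rw [h]; exact k1.symm) h1 h2 hne)
        have ham2 : a.1 ≠ m2 := fun h => hnadj_ab (by rw [h]; exact k1.symm)
        have hm1b : m1 ≠ b.1 := fun h => hnadj_ab (by rw [← h]; exact g1)
        have hp4 : (Walk.cons g1 (Walk.cons g2 (Walk.cons k2.symm
            (Walk.cons k1.symm Walk.nil)))).IsPath := by
          simp [Walk.isPath_def, g1.ne, g2.ne, k2.ne', k1.ne', hne, hne1, hne2.symm,
            ham2, hm1b, hm12]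
        have hp2 : (Walk.cons h1 (Walk.cons h2 Walk.nil)).IsPath := by
          simp [Walk.isPath_def, h1.ne, h2.ne, hne]
        have heq := isAcyclic_iff_path_unique.mp hacyc ⟨_, hp4⟩ ⟨_, hp2⟩
        have := congrArg (fun p : Δ.Path a.1 b.1 => p.1.length) heq
        simp [Walk.length_cons] at this
end

section
/- Let G be a finite group with a normal abelian 2-subgroup N and let P be a Sylow 2-subgroup of G. If P splits over N (i.e., N has a complement in P), then G splits over N. -/
open scoped Pointwise

/-- Gaschütz's theorem (for `p = 2`): let `G` be a finite group with a normal abelian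
2-subgroup `N` contained in a Sylow 2-subgroup `P` of `G`.  If `N` has a complement in
`P`, then `N` has a complement in `G`. -/
theorem gaschutz_split
    (G : Type*) [Group G] [Finite G]
    (N : Subgroup G) [N.Normal] (hN2 : IsPGroup 2 N)
    (hNab : ∀ x ∈ N, ∀ y ∈ N, Commute x y)
    (P : Sylow 2 G) (hNP : N ≤ (P : Subgroup G))
    (hsplit : ∃ K : Subgroup G, K ≤ (P : Subgroup G) ∧ N ⊓ K = ⊥ ∧ N ⊔ K = (P : Subgroup G)) :
    ∃ H : Subgroup G, N.IsComplement' H := by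
  classical
  obtain ⟨K, hKP, hNK, hNKsup⟩ := hsplit
  by_cases hbot : N = ⊥
  · exact ⟨⊤, hbot ▸ Subgroup.isComplement'_bot_top⟩
  have hNnormal : N.Normal := inferInstance
  set Ps : Subgroup G := (P : Subgroup G) with hPs
  -- decomposition of elements of P as n * k
  have decomp : ∀ p : Ps, ∃ n, n ∈ N ∧ ∃ k, k ∈ K ∧ (p : G) = n * k := by
    intro p
    have hp : (p : G) ∈ N ⊔ K := by rw [hNKsup]; exact p.2
    have hp2 : (p : G) ∈ ((N : Set G) * (K : Set G)) := by
      rw [← Subgroup.normal_mul N K]; exact hp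
    obtain ⟨n, hn, k, hk, hnk⟩ := hp2
    exact ⟨n, hn, k, hk, hnk.symm⟩
  choose ν hνN κ hκK hdec using decomp
  -- uniqueness of the N-part
  have uniq : ∀ {n k n' k' : G}, n ∈ N → k ∈ K → n' ∈ N → k' ∈ K →
      n * k = n' * k' → n = n' := by
    intro n k n' k' hn hk hn' hk' h
    have hn2 : n = n' * k' * k⁻¹ := by rw [← h]; group
    have h1 : n'⁻¹ * n = k' * k⁻¹ := by rw [hn2]; group
    have h2 : n'⁻¹ * n ∈ N ⊓ K := by
      refine ⟨N.mul_mem (N.inv_mem hn') hn, ?_⟩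
      rw [h1]; exact K.mul_mem hk' (K.inv_mem hk)
    rw [hNK, Subgroup.mem_bot] at h2
    rw [← mul_left_cancel_iff (a := n'⁻¹), h2, inv_mul_cancel]
  -- ν is a "crossed retraction" on P
  have νcoc : ∀ p p' : Ps, ν (p * p') = ν p * ((p : G) * ν p' * (p : G)⁻¹) := by
    intro p p'
    have hconjN : κ p * ν p' * (κ p)⁻¹ ∈ N := hNnormal.conj_mem _ (hνN p') _
    have hkey : (↑(p * p') : G) = (ν p * (κ p * ν p' * (κ p)⁻¹)) * (κ p * κ p') := by
      push_cast
      rw [hdec p, hdec p']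
      group
    have := uniq (hνN (p * p')) (hκK (p * p'))
      (N.mul_mem (hνN p) hconjN) (K.mul_mem (hκK p) (hκK p'))
      ((hdec (p * p')).symm.trans hkey)
    have h2 : ν (p * p') = ν p * (κ p * ν p' * (κ p)⁻¹) := by simpa using this
    rw [h2]
    congr 1
    have hcomm : Commute (ν p) (κ p * ν p' * (κ p)⁻¹) := hNab _ (hνN p) _ hconjN
    have h3 : ν p * (κ p * ν p' * (κ p)⁻¹) * (ν p)⁻¹ = κ p * ν p' * (κ p)⁻¹ := by
      rw [hcomm.eq]; group
    rw [hdec p, mul_inv_rev, ← h3]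
    group
  have νN : ∀ (p : Ps), (p : G) ∈ N → ν p = (p : G) := by
    intro p hp
    exact uniq (hνN p) (hκK p) hp K.one_mem (by rw [mul_one, ← hdec p])
  -- N as a commutative group
  letI cgN : CommGroup ↥N :=
    { (inferInstance : Group ↥N) with
      mul_comm := fun a b => Subtype.ext (hNab _ a.2 _ b.2) }
  -- conjugation automorphisms of N
  have conjmem : ∀ (g : G) (a : ↥N), g * ↑a * g⁻¹ ∈ N := fun g a =>
    hNnormal.conj_mem _ a.2 g
  let c : G → (↥N →* ↥N) := fun g =>
    { toFun := fun a => ⟨g * ↑a * g⁻¹, conjmem g a⟩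
      map_one' := by ext; simp
      map_mul' := by intro a b; ext; push_cast; group }
  -- the coset space
  letI : Fintype G := Fintype.ofFinite G
  letI : Fintype (G ⧸ Ps) := Fintype.ofFinite _
  set X := G ⧸ Ps with hX
  let t : X → G := fun x => x.out
  have ht : ∀ x : X, QuotientGroup.mk (t x) = x := fun x => QuotientGroup.out_eq' x
  have mem1 : ∀ (g : G) (x : X), (t (g • x))⁻¹ * g * t x ∈ Ps := by
    intro g x
    have h1 : (QuotientGroup.mk (g * t x) : X) = g • x := by
      conv_rhs => rw [← ht x]
      exact (MulAction.Quotient.smul_mk Ps g (t x)).symm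
    have h2 : (QuotientGroup.mk (t (g • x)) : X) = QuotientGroup.mk (g * t x) := by
      rw [ht, h1]
    rw [QuotientGroup.eq] at h2
    rwa [← mul_assoc] at h2
  let νN' : Ps → ↥N := fun p => ⟨ν p, hνN p⟩
  have νN'coc : ∀ p p' : Ps, νN' (p * p') = νN' p * c (p : G) (νN' p') := by
    intro p p'
    ext
    show ν (p * p') = ν p * (↑p * ν p' * (↑p)⁻¹)
    exact νcoc p p'
  let w : G → X → ↥N := fun g x =>
    c (t (g • x)) (νN' ⟨(t (g • x))⁻¹ * g * t x, mem1 g x⟩)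
  -- cocycle identity for w
  have wmul : ∀ (g h : G) (x : X), w (g * h) x = w g (h • x) * c g (w h x) := by
    intro g h x
    have hsm : (g * h) • x = g • (h • x) := mul_smul g h x
    set a : Ps := ⟨(t (g • (h • x)))⁻¹ * g * t (h • x), mem1 g (h • x)⟩ with ha
    set b : Ps := ⟨(t (h • x))⁻¹ * h * t x, mem1 h x⟩ with hb
    have hab : (⟨(t ((g * h) • x))⁻¹ * (g * h) * t x, mem1 (g * h) x⟩ : Ps) = a * b := by
      ext
      push_cast [ha, hb, hsm]
      group
    show c (t ((g * h) • x)) (νN' ⟨(t ((g * h) • x))⁻¹ * (g * h) * t x, mem1 (g * h) x⟩) = _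
    rw [hab, νN'coc]
    ext
    simp only [w, c, νN', MonoidHom.coe_mk, OneHom.coe_mk, MulMemClass.coe_mul, hsm,
      ← ha, ← hb]
    rw [show (a : G) = (t (g • (h • x)))⁻¹ * g * t (h • x) from rfl]
    group
  let Pf : G → ↥N := fun g => ∏ x : X, w g x
  have Pcoc : ∀ g h : G, Pf (g * h) = Pf g * c g (Pf h) := by
    intro g h
    calc Pf (g * h) = ∏ x : X, (w g (h • x) * c g (w h x)) := by
          refine Finset.prod_congr rfl fun x _ => wmul g h x
    _ = (∏ x : X, w g (h • x)) * ∏ x : X, c g (w h x) := Finset.prod_mul_distrib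
    _ = Pf g * c g (Pf h) := by
        rw [← map_prod (c g)]
        congr 1
        exact Equiv.prod_comp (MulAction.toPerm h) (w g)
  set q : ℕ := Fintype.card X with hq
  have PN : ∀ (n : G) (hn : n ∈ N), Pf n = (⟨n, hn⟩ : ↥N) ^ q := by
    intro n hn
    have hfix : ∀ x : X, n • x = x := by
      intro x
      induction x using QuotientGroup.induction_on with
      | H a =>
        show (n • (QuotientGroup.mk a : X)) = QuotientGroup.mk a
        rw [MulAction.Quotient.smul_mk]
        rw [QuotientGroup.eq]
        have : (n • a)⁻¹ * a = a⁻¹ * n⁻¹ * a := by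
          show (n * a)⁻¹ * a = a⁻¹ * n⁻¹ * a; group
        rw [this]
        exact hNP (by simpa using hNnormal.conj_mem n⁻¹ (inv_mem hn) a⁻¹)
    have hterm : ∀ x : X, w n x = (⟨n, hn⟩ : ↥N) := by
      intro x
      have hmem : (t (n • x))⁻¹ * n * t x ∈ N := by
        rw [hfix x]
        simpa [mul_assoc] using hNnormal.conj_mem n hn (t x)⁻¹
      have hν : ν ⟨(t (n • x))⁻¹ * n * t x, mem1 n x⟩ = (t (n • x))⁻¹ * n * t x :=
        νN _ hmem
      ext
      show t (n • x) * ↑(νN' ⟨(t (n • x))⁻¹ * n * t x, mem1 n x⟩) * (t (n • x))⁻¹ = n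
      have : (νN' ⟨(t (n • x))⁻¹ * n * t x, mem1 n x⟩ : G) = (t (n • x))⁻¹ * n * t x := hν
      rw [this, hfix x]
      group
    calc Pf n = ∏ _x : X, (⟨n, hn⟩ : ↥N) := Finset.prod_congr rfl fun x _ => hterm x
    _ = (⟨n, hn⟩ : ↥N) ^ q := by rw [Finset.prod_const, Finset.card_univ]
  -- q is odd, |N| is a power of 2
  haveI : Fact (Nat.Prime 2) := ⟨Nat.prime_two⟩
  have hqind : q = Ps.index := by
    rw [Subgroup.index, Nat.card_eq_fintype_card]
  have hq2 : ¬ (2 ∣ q) := by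
    rw [hqind]
    exact P.not_dvd_index
  obtain ⟨e, he⟩ := (IsPGroup.iff_card).mp hN2
  have hcop : Nat.Coprime q (Nat.card ↥N) := by
    rw [he]
    exact Nat.Coprime.pow_right e ((Nat.prime_two.coprime_iff_not_dvd.mpr hq2).symm)
  have honelt : 1 < Nat.card ↥N := (Subgroup.one_lt_card_iff_ne_bot N).mpr hbot
  obtain ⟨m, -, hm⟩ := Nat.exists_mul_mod_eq_one_of_coprime hcop honelt
  have hpow : ∀ a : ↥N, a ^ (q * m) = a := by
    intro a
    have hdm := Nat.div_add_mod (q * m) (Nat.card ↥N)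
    rw [hm] at hdm
    rw [← hdm, pow_add, pow_one, pow_mul, pow_card_eq_one', one_pow, one_mul]
  -- the averaged crossed retraction
  let r : G → ↥N := fun g => Pf g ^ m
  have rcoc : ∀ g h : G, r (g * h) = r g * c g (r h) := by
    intro g h
    show Pf (g * h) ^ m = Pf g ^ m * c g (Pf h ^ m)
    rw [Pcoc, mul_pow, map_pow]
  have rN : ∀ (n : G) (hn : n ∈ N), r n = (⟨n, hn⟩ : ↥N) := by
    intro n hn
    show Pf n ^ m = _
    rw [PN n hn, ← pow_mul]
    exact hpow _
  have r1 : r 1 = 1 := by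
    have := rN 1 N.one_mem
    exact this
  have rinvmem : ∀ g : G, r g = 1 → r g⁻¹ = 1 := by
    intro g hg
    have h := rcoc g g⁻¹
    rw [mul_inv_cancel, r1, hg, one_mul] at h
    have h2 : (c g) (r g⁻¹) = 1 := h.symm
    have h3 : (c g⁻¹) ((c g) (r g⁻¹)) = (c g⁻¹) 1 := by rw [h2]
    rw [map_one] at h3
    have h4 : (c g⁻¹) ((c g) (r g⁻¹)) = r g⁻¹ := by
      ext
      show g⁻¹ * (g * ↑(r g⁻¹) * g⁻¹) * g⁻¹⁻¹ = ↑(r g⁻¹)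
      group
    rwa [h4] at h3
  let H : Subgroup G :=
    { carrier := { g | r g = 1 }
      one_mem' := r1
      mul_mem' := by
        intro a b ha hb
        show r (a * b) = 1
        rw [rcoc, ha, hb, map_one, mul_one]
      inv_mem' := by
        intro a ha
        exact rinvmem a ha }
  refine ⟨H, ?_⟩
  rw [Subgroup.IsComplement']
  rw [Subgroup.isComplement_iff_existsUnique]
  intro g
  have hcfix : ∀ (n : G), n ∈ N → ∀ a : ↥N, c n a = a := by
    intro n hn a
    ext
    show n * ↑a * n⁻¹ = ↑a
    have hcomm := (hNab n hn ↑a a.2).eq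
    rw [hcomm]
    group
  refine ⟨⟨⟨(r g : G), (r g).2⟩, ⟨(↑(r g) : G)⁻¹ * g, ?_⟩⟩, ?_, ?_⟩
  · show r ((↑(r g) : G)⁻¹ * g) = 1
    have h1 : r ((↑(r g) : G)⁻¹) = (r g)⁻¹ := by
      have h2 := rN ((↑(r g) : G)⁻¹) (N.inv_mem (r g).2)
      rw [h2]
      ext
      simp
    rw [rcoc, h1, hcfix _ (N.inv_mem (r g).2), inv_mul_cancel]
  · show (↑(r g) : G) * ((↑(r g) : G)⁻¹ * g) = g
    group
  · rintro ⟨⟨a, ha⟩, ⟨b, hb⟩⟩ hab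
    have ha' : a ∈ N := ha
    have hb' : r b = 1 := hb
    have hab' : a * b = g := hab
    have hra : r g = ⟨a, ha'⟩ := by
      rw [← hab', rcoc, hb', map_one, mul_one, rN a ha']
    have haeq : a = (↑(r g) : G) := by rw [hra]
    refine Prod.ext (Subtype.ext ?_) (Subtype.ext ?_)
    · exact haeq
    · show b = (↑(r g) : G)⁻¹ * g
      rw [← haeq, ← hab']
      group
end

section
/- Let V = GF(2)³ be the natural module for L = GL(3,2), W the unique indecomposable extension of V by the trivial module with [W/V, L] = 1 (so dim W = 4), M the normalizer in L of a Sylow 7-subgroup, and w ∈ W with W = ⟨w⟩ ⊕ V as M-modules. Then C_L(w) = M. -/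
private lemma div168 {n : ℕ} (h1 : n ∣ 168) (h2 : n % 7 = 1) (h3 : n ≠ 1) : n = 8 := by
  have h4 : n ∈ Nat.divisors 168 := Nat.mem_divisors.mpr ⟨h1, by norm_num⟩
  fin_cases h4 <;> omega

private lemma div8 {n : ℕ} (h1 : n ∣ 8) (h2 : n % 7 = 1) : n = 1 ∨ n = 8 := by
  have h4 : n ∈ Nat.divisors 8 := Nat.mem_divisors.mpr ⟨h1, by norm_num⟩
  fin_cases h4 <;> omega

private lemma cardGL : Nat.card (GL (Fin 3) (ZMod 2)) = 168 := by
  have h := Matrix.card_GL_field (𝔽 := ZMod 2) (n := 3)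
  rw [h, ZMod.card]
  decide

/-- Let `W` be the unique indecomposable 4-dimensional `GF(2)L`-module, `L = GL(3,2)`,
with a submodule `V'` isomorphic to the natural module and trivial quotient `W/V'`; let
`M = N_L(R)` for a Sylow 7-subgroup `R` of `L`, and let `w ∈ W` with `W = ⟨w⟩ ⊕ V'` as
`M`-modules (in particular `w` is fixed by `M`).  Then `C_L(w) = M`. -/
theorem stabilizer_of_w_eq_M
    (W : Type*) [AddCommGroup W] [Module (ZMod 2) W]
    (ρ : Representation (ZMod 2) (GL (Fin 3) (ZMod 2)) W)
    (hdim : Module.finrank (ZMod 2) W = 4)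
    (V' : Submodule (ZMod 2) W)
    (hinv : ∀ (g : GL (Fin 3) (ZMod 2)), ∀ v ∈ V', ρ g v ∈ V')
    (e : V' ≃ₗ[ZMod 2] (Fin 3 → ZMod 2))
    (heq : ∀ (g : GL (Fin 3) (ZMod 2)) (v : V'),
      e ⟨ρ g v.1, hinv g v.1 v.2⟩ = natRep g (e v))
    (htriv : ∀ (g : GL (Fin 3) (ZMod 2)) (x : W), ρ g x - x ∈ V')
    (hindec : ∀ U₁ U₂ : Submodule (ZMod 2) W,
      (∀ (g : GL (Fin 3) (ZMod 2)), ∀ v ∈ U₁, ρ g v ∈ U₁) →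
      (∀ (g : GL (Fin 3) (ZMod 2)), ∀ v ∈ U₂, ρ g v ∈ U₂) →
      IsCompl U₁ U₂ → U₁ = ⊥ ∨ U₂ = ⊥)
    (R : Sylow 7 (GL (Fin 3) (ZMod 2)))
    (M : Subgroup (GL (Fin 3) (ZMod 2)))
    (hM : M = Subgroup.normalizer (R : Subgroup (GL (Fin 3) (ZMod 2))))
    (w : W) (hw : w ∉ V')
    (hfix : ∀ m ∈ M, ρ m w = w)
    (hcompl : IsCompl (Submodule.span (ZMod 2) {w}) V') :
    ∀ g : GL (Fin 3) (ZMod 2), ρ g w = w ↔ g ∈ M := by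
  haveI : Fact (Nat.Prime 7) := ⟨by norm_num⟩
  -- the stabilizer of `w` as a subgroup
  let S : Subgroup (GL (Fin 3) (ZMod 2)) :=
  { carrier := {g | ρ g w = w}
    one_mem' := by simp
    mul_mem' := by
      intro a b ha hb
      simp only [Set.mem_setOf_eq] at *
      rw [map_mul, Module.End.mul_apply, hb, ha]
    inv_mem' := by
      intro a ha
      simp only [Set.mem_setOf_eq] at *
      conv_lhs => rw [← ha]
      rw [← Module.End.mul_apply, ← map_mul, inv_mul_cancel, map_one,
        Module.End.one_apply] }
  have hMS : M ≤ S := fun m hm => hfix m hm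
  -- the stabilizer is proper
  have hSneTop : S ≠ ⊤ := by
    intro htop
    have hall : ∀ g, ρ g w = w := fun g => by
      have : g ∈ S := htop ▸ Subgroup.mem_top g
      exact this
    have hinv1 : ∀ (g : GL (Fin 3) (ZMod 2)), ∀ v ∈ Submodule.span (ZMod 2) {w},
        ρ g v ∈ Submodule.span (ZMod 2) {w} := by
      intro g v hv
      rcases Submodule.mem_span_singleton.mp hv with ⟨c, rfl⟩
      rw [map_smul, hall g]
      exact Submodule.smul_mem _ c (Submodule.mem_span_singleton_self w)
    rcases hindec _ _ hinv1 hinv hcompl with h | h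
    · have hw0 : w = 0 := Submodule.span_singleton_eq_bot.mp h
      exact hw (hw0 ▸ V'.zero_mem)
    · have h0 : e.symm 1 = 0 := by
        have h1 : ((e.symm 1 : V') : W) ∈ (⊥ : Submodule (ZMod 2) W) := h.le (e.symm 1).2
        exact Subtype.ext (Submodule.mem_bot _ |>.mp h1)
      have : (1 : Fin 3 → ZMod 2) = 0 := by
        have := congrArg e h0
        rwa [e.apply_symm_apply, map_zero] at this
      exact absurd (congrFun this 0) (by decide)
  have hRM : (R : Subgroup (GL (Fin 3) (ZMod 2))) ≤ M := hM ▸ Subgroup.le_normalizer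
  have hRS : (R : Subgroup (GL (Fin 3) (ZMod 2))) ≤ S := hRM.trans hMS
  -- `M` has index 8
  have hidx : M.index = 8 := by
    apply div168
    · have := M.index_dvd_card
      rwa [cardGL] at this
    · have h1 := card_sylow_modEq_one 7 (GL (Fin 3) (ZMod 2))
      have h2 := Sylow.card_eq_index_normalizer R
      rw [hM]
      rw [h2] at h1
      simpa [Nat.ModEq] using h1
    · intro h1
      exact hSneTop (top_le_iff.mp ((Subgroup.index_eq_one.mp h1) ▸ hMS))
  -- the Sylow subgroup viewed inside `S`
  let R' : Sylow 7 S := R.subtype hRS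
  have hmemR' : ∀ y : S, y ∈ (R' : Subgroup S) ↔ (y : GL (Fin 3) (ZMod 2)) ∈
      (R : Subgroup (GL (Fin 3) (ZMod 2))) := fun y => Iff.rfl
  -- `M ∩ S` normalizes `R'` in `S`
  have hnormS : M.subgroupOf S ≤ Subgroup.normalizer ((R' : Subgroup S) : Set S) := by
    rintro ⟨m, hmS⟩ hm
    have hmM : m ∈ M := hm
    have hmn := Subgroup.mem_normalizer_iff.mp (hM ▸ hmM)
    rw [Subgroup.mem_normalizer_iff]
    intro x
    rw [hmemR', hmemR']
    exact hmn (x : GL (Fin 3) (ZMod 2))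
  -- there is a unique Sylow 7-subgroup of `S`
  have hnS : Nat.card (Sylow 7 S) = 1 := by
    have h1 := card_sylow_modEq_one 7 S
    have h2 := Sylow.card_eq_index_normalizer R'
    have h3 : (Subgroup.normalizer ((R' : Subgroup S) : Set S)).index ∣ (M.subgroupOf S).index :=
      Subgroup.index_dvd_of_le hnormS
    have h4 : (M.subgroupOf S).index * S.index = M.index :=
      Subgroup.relIndex_mul_index hMS
    have h5 : S.index ≠ 1 := fun h => hSneTop (Subgroup.index_eq_one.mp h)
    have hd8 : (M.subgroupOf S).index ∣ 8 := hidx ▸ ⟨S.index, h4.symm⟩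
    have hn8 : Nat.card (Sylow 7 S) ∣ 8 := (h2 ▸ h3).trans hd8
    have hmod : Nat.card (Sylow 7 S) % 7 = 1 := by simpa [Nat.ModEq] using h1
    rcases div8 hn8 hmod with h | h
    · exact h
    · exfalso
      have hnd : Nat.card (Sylow 7 S) ∣ (M.subgroupOf S).index := h2 ▸ h3
      rw [h] at hnd
      have hd : (M.subgroupOf S).index = 8 := Nat.dvd_antisymm hd8 hnd
      rw [hd, hidx] at h4
      omega
  -- hence `R'` is normal in `S`
  have hnormal : (R' : Subgroup S).Normal := by
    rw [← Subgroup.normalizer_eq_top_iff, ← Subgroup.index_eq_one]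
    have h2 := Sylow.card_eq_index_normalizer R'
    rw [hnS] at h2
    exact h2.symm
  -- so `S ≤ N_L(R) = M`
  have key : ∀ t ∈ S, ∀ x ∈ (R : Subgroup (GL (Fin 3) (ZMod 2))),
      t * x * t⁻¹ ∈ (R : Subgroup (GL (Fin 3) (ZMod 2))) := by
    intro t ht x hx
    have hxS : x ∈ S := hMS (hRM hx)
    have := hnormal.conj_mem ⟨x, hxS⟩ ((hmemR' ⟨x, hxS⟩).mpr hx) ⟨t, ht⟩
    exact (hmemR' _).mp this
  have hSM : S ≤ M := by
    intro s hs
    rw [hM, Subgroup.mem_normalizer_iff]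
    intro x
    constructor
    · exact fun hx => key s hs x hx
    · intro hx
      have := key s⁻¹ (S.inv_mem hs) _ hx
      simpa [mul_assoc] using this
  exact fun g => ⟨fun h => hSM h, fun h => hfix g h⟩
end
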